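/- arXiv:2503.10430 — 2 statements merged into one kernel-verified Lean document; each statement's English description precedes it below -/
import Mathlib

section
/- Let U be a nonempty open set such that the images f_1(U),…,f_m(U) are pairwise disjoint subsets of U. Then every boundary set of A is disjoint from U: for all words v, w ∈ {1,…,m}^k of equal length k ≥ 1 with v_1 ≠ w_1 one has (A ∩ f_w^{-1}(f_v(A))) ∩ U = ∅. -/
open Set

noncomputable section

/-- Points of Euclidean space `ℝ^d`. -/
abbrev Pt (d : ℕ) := EuclideanSpace ℝ (Fin d)

/-- For a word `w = w₁…w_k`, the map `f_w = f_{w₁} ∘ ⋯ ∘ f_{w_k}`. -/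
def fWord {d m : ℕ} (f : Fin m → Pt d → Pt d) (w : List (Fin m)) : Pt d → Pt d :=
  w.foldr (fun j g => f j ∘ g) id

/-- The union of all boundary sets `A ∩ f_w⁻¹(f_v(A))`, over words `v, w` of equal
length `k ≥ 1` whose first letters differ. -/
def boundaryUnion {d m : ℕ} (f : Fin m → Pt d → Pt d) (A : Set (Pt d)) : Set (Pt d) :=
  {x | ∃ v w : List (Fin m), v ≠ [] ∧ v.length = w.length ∧ v.head? ≠ w.head? ∧
        x ∈ A ∩ fWord f w ⁻¹' (fWord f v '' A)}

/-- The dynamical boundary `B(A)`: the closure of the union of all boundary sets. -/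
def dynBoundary {d m : ℕ} (f : Fin m → Pt d → Pt d) (A : Set (Pt d)) : Set (Pt d) :=
  closure (boundaryUnion f A)
/-! Because every `f_j` maps `U` into itself, the attractor lies in `closure U`: a point of `A`
farthest from `U` is `f_j b` for some `b ∈ A`, hence at most `r_j < 1` times as far from `U` as
`b`, so that largest distance is `0`. Therefore `f_v(A) ⊆ closure (f_{v₁}(U))`, whereas
`f_w(x) ∈ f_{w₁}(U)` for `x ∈ U`; the set `f_{w₁}(U)` is open and disjoint from `f_{v₁}(U)`, hence
from its closure. -/

open Metric NNReal

section Contraction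

variable {X : Type*} [PseudoMetricSpace X]

theorem lipschitzWith_of_dist_eq_mul {f : X → X} {c : ℝ} (hc : 0 ≤ c)
    (hf : ∀ x y, dist (f x) (f y) = c * dist x y) : LipschitzWith c.toNNReal f :=
  LipschitzWith.of_dist_le_mul fun x y => by rw [hf, Real.coe_toNNReal _ hc]

theorem LipschitzWith.infDist_apply_le_of_mapsTo {f : X → X} {K : ℝ≥0} (hf : LipschitzWith K f)
    {U : Set X} (hU : U.Nonempty) (hfU : MapsTo f U U) (x : X) :
    infDist (f x) U ≤ K * infDist x U := by
  have : Nonempty U := hU.to_subtype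
  rw [infDist_eq_iInf (x := x), Real.mul_iInf_of_nonneg K.coe_nonneg]
  refine le_ciInf fun y => ?_
  calc infDist (f x) U ≤ dist (f x) (f y) := infDist_le_dist_of_mem (hfU y.2)
    _ ≤ K * dist x y := hf.dist_le_mul x y

theorem IsCompact.subset_closure_of_contractions {ι : Type*} {f : ι → X → X} {K : ι → ℝ≥0}
    (hK : ∀ i, K i < 1) (hf : ∀ i, LipschitzWith (K i) (f i)) {A : Set X} (hAc : IsCompact A)
    (hA : A ⊆ ⋃ i, f i '' A) {U : Set X} (hU : U.Nonempty) (hfU : ∀ i, MapsTo (f i) U U) :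
    A ⊆ closure U := by
  rcases A.eq_empty_or_nonempty with rfl | hAne
  · exact empty_subset _
  obtain ⟨a, haA, hmax⟩ := hAc.exists_isMaxOn hAne (continuous_infDist_pt U).continuousOn
  have ha : infDist a U = 0 := by
    obtain ⟨i, b, hbA, rfl⟩ := mem_iUnion.mp (hA haA)
    have hcontr := (hf i).infDist_apply_le_of_mapsTo hU (hfU i) b
    have hfar : infDist b U ≤ infDist (f i b) U := hmax hbA
    nlinarith [hK i, infDist_nonneg (x := b) (s := U), infDist_nonneg (x := f i b) (s := U)]
  intro x hx
  rw [mem_closure_iff_infDist_zero hU]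
  exact le_antisymm (ha ▸ hmax hx) infDist_nonneg

end Contraction

section Similitude

variable {E : Type*} [NormedAddCommGroup E] [NormedSpace ℝ E] {f : E → E} {c : ℝ}

/-- By Mazur–Ulam an isometry is affine, and in finite dimension an injective affine self-map
is bijective. -/
theorem Isometry.isOpenMap_of_finiteDimensional [StrictConvexSpace ℝ E] [FiniteDimensional ℝ E]
    {g : E → E} (hg : Isometry g) : IsOpenMap g :=
  have : Inhabited E := ⟨0⟩
  (hg.affineIsometryOfStrictConvexSpace.toAffineIsometryEquiv rfl).toHomeomorph.isOpenMap

theorem isOpenMap_of_dist_eq_mul [StrictConvexSpace ℝ E] [FiniteDimensional ℝ E] (hc : 0 < c)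
    (hf : ∀ x y, dist (f x) (f y) = c * dist x y) : IsOpenMap f := by
  have hg : Isometry (c⁻¹ • f) := Isometry.of_dist_eq fun x y => by
    rw [Pi.smul_apply, Pi.smul_apply, dist_smul₀, hf, Real.norm_of_nonneg (inv_nonneg.2 hc.le),
      inv_mul_cancel_left₀ hc.ne']
  have hfg : f = (c • ·) ∘ (c⁻¹ • f) := by
    funext x
    simp [smul_smul, mul_inv_cancel₀ hc.ne']
  rw [hfg]
  exact (Homeomorph.smulOfNeZero c hc.ne').isOpenMap.comp hg.isOpenMap_of_finiteDimensional

end Similitude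

section Words

variable {d m : ℕ} {f : Fin m → Pt d → Pt d}

theorem continuous_fWord (hf : ∀ j, Continuous (f j)) (w : List (Fin m)) :
    Continuous (fWord f w) := by
  induction w with
  | nil => exact continuous_id
  | cons j w ih => exact (hf j).comp ih

theorem mapsTo_fWord {U : Set (Pt d)} (hfU : ∀ j, MapsTo (f j) U U) (w : List (Fin m)) :
    MapsTo (fWord f w) U U := by
  induction w with
  | nil => exact mapsTo_id U
  | cons j w ih => exact (hfU j).comp ih

end Words

theorem boundarySet_inter_osc_set_eq_empty_general
    {d m : ℕ} (f : Fin m → Pt d → Pt d) (r : Fin m → ℝ)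
    (hr0 : ∀ j, 0 < r j) (hr1 : ∀ j, r j < 1)
    (hf : ∀ j x y, dist (f j x) (f j y) = r j * dist x y)
    (A : Set (Pt d)) (hAc : IsCompact A)
    (hA : A = ⋃ j, f j '' A)
    (U : Set (Pt d)) (hUne : U.Nonempty) (hUo : IsOpen U)
    (hUsub : ∀ j, f j '' U ⊆ U)
    (hUdisj : ∀ i j, i ≠ j → Disjoint (f i '' U) (f j '' U))
    (v w : List (Fin m)) (hv : v ≠ []) (hlen : v.length = w.length)
    (hhead : v.head? ≠ w.head?) :
    (A ∩ fWord f w ⁻¹' (fWord f v '' A)) ∩ U = ∅ := by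
  obtain ⟨i, v, rfl⟩ := List.exists_cons_of_ne_nil hv
  obtain ⟨j, w, rfl⟩ := List.exists_cons_of_length_eq_add_one hlen.symm
  have hij : i ≠ j := by simpa using hhead
  have hlip j := lipschitzWith_of_dist_eq_mul (hr0 j).le (hf j)
  have hfU j : MapsTo (f j) U U := mapsTo_iff_image_subset.2 (hUsub j)
  have hAU : A ⊆ closure U := hAc.subset_closure_of_contractions
    (fun j => Real.toNNReal_lt_one.2 (hr1 j)) hlip hA.subset hUne hfU
  have hpiece : fWord f (i :: v) '' A ⊆ closure (f i '' U) := by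
    rintro _ ⟨a, haA, rfl⟩
    exact map_mem_closure (f := f i) (hlip i).continuous
      (map_mem_closure (continuous_fWord (fun j => (hlip j).continuous) v) (hAU haA)
        (mapsTo_fWord hfU v)) (mapsTo_image (f i) U)
  have hdisj : Disjoint (f j '' U) (closure (f i '' U)) :=
    (hUdisj j i hij.symm).closure_right (isOpenMap_of_dist_eq_mul (hr0 j) (hf j) U hUo)
  refine eq_empty_iff_forall_notMem.2 fun x ⟨⟨_, hxv⟩, hxU⟩ => ?_
  exact hdisj.ne_of_mem ⟨fWord f w x, mapsTo_fWord hfU w hxU, rfl⟩ (hpiece hxv) rfl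

/-- If the images `f_j(U)` of a nonempty open set `U` are pairwise disjoint subsets
of `U`, then every boundary set `A ∩ f_w⁻¹(f_v(A))` (for words `v, w` of equal
length `k ≥ 1` with different first letters) is disjoint from `U`. -/
theorem boundarySet_inter_osc_set_eq_empty
    {d m : ℕ} (hm : 2 ≤ m) (f : Fin m → Pt d → Pt d) (r : Fin m → ℝ)
    (hr0 : ∀ j, 0 < r j) (hr1 : ∀ j, r j < 1)
    (hf : ∀ j x y, dist (f j x) (f j y) = r j * dist x y)
    (A : Set (Pt d)) (hAne : A.Nonempty) (hAc : IsCompact A)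
    (hA : A = ⋃ j, f j '' A)
    (U : Set (Pt d)) (hUne : U.Nonempty) (hUo : IsOpen U)
    (hUsub : ∀ j, f j '' U ⊆ U)
    (hUdisj : ∀ i j, i ≠ j → Disjoint (f i '' U) (f j '' U))
    (v w : List (Fin m)) (hv : v ≠ []) (hlen : v.length = w.length)
    (hhead : v.head? ≠ w.head?) :
    (A ∩ fWord f w ⁻¹' (fWord f v '' A)) ∩ U = ∅ :=
  boundarySet_inter_osc_set_eq_empty_general f r hr0 hr1 hf A hAc hA U hUne hUo hUsub hUdisj v w hv
    hlen hhead
end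
end

section
/- Let h : ℂ → ℂ be the map h(z) = iz − 1 and set B = A ∩ h(A). Then B satisfies the self-similar equation B = f_{312}(B) ∪ f_{123}(B), where f_{w_1 w_2 w_3} = f_{w_1} ∘ f_{w_2} ∘ f_{w_3} (two similitudes of contraction ratio 1/8). -/
/-!
The attractor lies in the square `[-1/2, 1/2]²` (the sup-norm `M` of its points satisfies
`M ≤ M/2 + 1/4`), and `h(A)` lies in the adjacent square to the left, so `B` sits on the common
side `re = -1/2`: it is `{-1/2 + t i : t ∈ L ∩ D}`, where `L` and `D` are the parameter sets of `A`
on the left and bottom sides. Since each `fsqᵢ` maps sides of the square to sides, these satisfy the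
graph-directed equations `L = (-D/2 - 1/4) ∪ (-D/2 + 1/4)` and `D = (-L/4 - 3/8) ∪ (-L/4 + 3/8)`.
Unfolding both once more gives `L ∩ D = (L ∩ D)/8 + 7/16 ∪ (L ∩ D)/8 - 7/16`, which is the claim;
the only care needed is at the corners of the square, which belong to two sides.
-/

open Set Complex

noncomputable section

/-- The fractal-square IFS maps `f₁(z) = -iz/2 - (1+i)/4`, `f₂(z) = -z/2 + (1-i)/4`,
`f₃(z) = -iz/2 - (1-i)/4`. -/
def fsq₁ : ℂ → ℂ := fun z => -Complex.I * z / 2 - (1 + Complex.I) / 4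

def fsq₂ : ℂ → ℂ := fun z => -z / 2 + (1 - Complex.I) / 4

def fsq₃ : ℂ → ℂ := fun z => -Complex.I * z / 2 - (1 - Complex.I) / 4

@[simp] lemma fsq₁_re (z : ℂ) : (fsq₁ z).re = z.im / 2 - 1 / 4 := by simp [fsq₁]
@[simp] lemma fsq₁_im (z : ℂ) : (fsq₁ z).im = -z.re / 2 - 1 / 4 := by simp [fsq₁]
@[simp] lemma fsq₂_re (z : ℂ) : (fsq₂ z).re = -z.re / 2 + 1 / 4 := by simp [fsq₂]
@[simp] lemma fsq₂_im (z : ℂ) : (fsq₂ z).im = -z.im / 2 - 1 / 4 := by simp [fsq₂]; ring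
@[simp] lemma fsq₃_re (z : ℂ) : (fsq₃ z).re = z.im / 2 - 1 / 4 := by simp [fsq₃]
@[simp] lemma fsq₃_im (z : ℂ) : (fsq₃ z).im = -z.re / 2 + 1 / 4 := by simp [fsq₃]; ring

theorem IsCompact.forall_le_div_of_forall_exists_le {X : Type*} [TopologicalSpace X] {A : Set X}
    (hAc : IsCompact A) (hAne : A.Nonempty) {φ : X → ℝ} (hφ : ContinuousOn φ A) {c d : ℝ}
    (hc₀ : 0 ≤ c) (hc₁ : c < 1) (h : ∀ z ∈ A, ∃ y ∈ A, φ z ≤ c * φ y + d) :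
    ∀ z ∈ A, φ z ≤ d / (1 - c) := by
  obtain ⟨z₀, hz₀, hmax⟩ := hAc.exists_isMaxOn hAne hφ
  have hz₀_le : φ z₀ ≤ d / (1 - c) := by
    obtain ⟨y, hy, hle⟩ := h z₀ hz₀
    rw [le_div_iff₀ (by linarith)]
    nlinarith [mul_le_mul_of_nonneg_left (hmax hy) hc₀]
  exact fun z hz => (hmax hz).trans hz₀_le

def leftEdge (A : Set ℂ) : Set ℝ := im '' {z ∈ A | z.re = -1/2}

def rightEdge (A : Set ℂ) : Set ℝ := im '' {z ∈ A | z.re = 1/2}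

def bottomEdge (A : Set ℂ) : Set ℝ := re '' {z ∈ A | z.im = -1/2}

def topEdge (A : Set ℂ) : Set ℝ := re '' {z ∈ A | z.im = 1/2}

section

variable {A : Set ℂ}

lemma mapsTo_fsq₁ (hA : A = fsq₁ '' A ∪ fsq₂ '' A ∪ fsq₃ '' A) : MapsTo fsq₁ A A :=
  fun _ hz => hA ▸ Or.inl (Or.inl (mem_image_of_mem _ hz))

lemma mapsTo_fsq₂ (hA : A = fsq₁ '' A ∪ fsq₂ '' A ∪ fsq₃ '' A) : MapsTo fsq₂ A A :=
  fun _ hz => hA ▸ Or.inl (Or.inr (mem_image_of_mem _ hz))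

lemma mapsTo_fsq₃ (hA : A = fsq₁ '' A ∪ fsq₂ '' A ∪ fsq₃ '' A) : MapsTo fsq₃ A A :=
  fun _ hz => hA ▸ Or.inr (mem_image_of_mem _ hz)

lemma exists_eq_fsq_of_mem (hA : A = fsq₁ '' A ∪ fsq₂ '' A ∪ fsq₃ '' A) {z : ℂ} (hz : z ∈ A) :
    ∃ y ∈ A, fsq₁ y = z ∨ fsq₂ y = z ∨ fsq₃ y = z := by
  rw [hA] at hz
  rcases hz with (⟨y, hy, rfl⟩ | ⟨y, hy, rfl⟩) | ⟨y, hy, rfl⟩ <;> exact ⟨y, hy, by simp⟩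

lemma subset_Icc_reProdIm_Icc (hAne : A.Nonempty) (hAc : IsCompact A)
    (hA : A = fsq₁ '' A ∪ fsq₂ '' A ∪ fsq₃ '' A) :
    A ⊆ Icc (-1/2) (1/2) ×ℂ Icc (-1/2) (1/2) := by
  have hcont : Continuous fun z : ℂ => max |z.re| |z.im| := by fun_prop
  have hstep : ∀ z ∈ A, ∃ y ∈ A, max |z.re| |z.im| ≤ 1 / 2 * max |y.re| |y.im| + 1 / 4 := by
    intro z hz
    obtain ⟨y, hy, h | h | h⟩ := exists_eq_fsq_of_mem hA hz <;> subst h <;> refine ⟨y, hy, ?_⟩ <;>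
    · have := le_max_left |y.re| |y.im|
      have := le_max_right |y.re| |y.im|
      simp only [fsq₁_re, fsq₁_im, fsq₂_re, fsq₂_im, fsq₃_re, fsq₃_im, max_le_iff, abs_le]
      constructor <;> constructor <;>
        linarith [le_abs_self y.re, neg_abs_le y.re, le_abs_self y.im, neg_abs_le y.im]
  have hmax := hAc.forall_le_div_of_forall_exists_le hAne hcont.continuousOn
    (by norm_num) (by norm_num) hstep
  intro z hz
  have := hmax z hz
  norm_num [max_le_iff, abs_le] at this
  exact ⟨⟨by linarith, by linarith⟩, by linarith, by linarith⟩

lemma leftEdge_eq (hA : A = fsq₁ '' A ∪ fsq₂ '' A ∪ fsq₃ '' A)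
    (hQ : A ⊆ Icc (-1/2) (1/2) ×ℂ Icc (-1/2) (1/2)) :
    leftEdge A =
      (fun d => -d / 2 - 1 / 4) '' bottomEdge A ∪ (fun d => -d / 2 + 1 / 4) '' bottomEdge A := by
  ext t
  constructor
  · rintro ⟨z, ⟨hz, hre⟩, rfl⟩
    obtain ⟨y, hy, rfl | rfl | rfl⟩ := exists_eq_fsq_of_mem hA hz <;>
      obtain ⟨⟨_, _⟩, _, _⟩ := hQ hy <;> simp only [fsq₁_re, fsq₂_re, fsq₃_re] at hre
    · exact Or.inl ⟨y.re, ⟨y, ⟨hy, by linarith⟩, rfl⟩, by simp⟩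
    · linarith
    · exact Or.inr ⟨y.re, ⟨y, ⟨hy, by linarith⟩, rfl⟩, by simp⟩
  · rintro (⟨_, ⟨z, ⟨hz, him⟩, rfl⟩, rfl⟩ | ⟨_, ⟨z, ⟨hz, him⟩, rfl⟩, rfl⟩)
    · exact ⟨fsq₁ z, ⟨mapsTo_fsq₁ hA hz, by norm_num [him]⟩, by simp⟩
    · exact ⟨fsq₃ z, ⟨mapsTo_fsq₃ hA hz, by norm_num [him]⟩, by simp⟩

lemma rightEdge_eq (hA : A = fsq₁ '' A ∪ fsq₂ '' A ∪ fsq₃ '' A)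
    (hQ : A ⊆ Icc (-1/2) (1/2) ×ℂ Icc (-1/2) (1/2)) :
    rightEdge A = (fun u => -u / 2 - 1 / 4) '' leftEdge A := by
  ext t
  constructor
  · rintro ⟨z, ⟨hz, hre⟩, rfl⟩
    obtain ⟨y, hy, rfl | rfl | rfl⟩ := exists_eq_fsq_of_mem hA hz <;>
      obtain ⟨⟨_, _⟩, _, _⟩ := hQ hy <;> simp only [fsq₁_re, fsq₂_re, fsq₃_re] at hre
    · linarith
    · exact ⟨y.im, ⟨y, ⟨hy, by linarith⟩, rfl⟩, by simp⟩
    · linarith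
  · rintro ⟨_, ⟨z, ⟨hz, hre⟩, rfl⟩, rfl⟩
    exact ⟨fsq₂ z, ⟨mapsTo_fsq₂ hA hz, by norm_num [hre]⟩, by simp⟩

lemma topEdge_eq (hA : A = fsq₁ '' A ∪ fsq₂ '' A ∪ fsq₃ '' A)
    (hQ : A ⊆ Icc (-1/2) (1/2) ×ℂ Icc (-1/2) (1/2)) :
    topEdge A = (fun u => u / 2 - 1 / 4) '' leftEdge A := by
  ext t
  constructor
  · rintro ⟨z, ⟨hz, him⟩, rfl⟩
    obtain ⟨y, hy, rfl | rfl | rfl⟩ := exists_eq_fsq_of_mem hA hz <;>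
      obtain ⟨⟨_, _⟩, _, _⟩ := hQ hy <;> simp only [fsq₁_im, fsq₂_im, fsq₃_im] at him
    · linarith
    · linarith
    · exact ⟨y.im, ⟨y, ⟨hy, by linarith⟩, rfl⟩, by simp⟩
  · rintro ⟨_, ⟨z, ⟨hz, hre⟩, rfl⟩, rfl⟩
    exact ⟨fsq₃ z, ⟨mapsTo_fsq₃ hA hz, by norm_num [hre]⟩, by simp⟩

lemma bottomEdge_eq (hA : A = fsq₁ '' A ∪ fsq₂ '' A ∪ fsq₃ '' A)
    (hQ : A ⊆ Icc (-1/2) (1/2) ×ℂ Icc (-1/2) (1/2)) :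
    bottomEdge A =
      (fun r => r / 2 - 1 / 4) '' rightEdge A ∪ (fun s => -s / 2 + 1 / 4) '' topEdge A := by
  ext t
  constructor
  · rintro ⟨z, ⟨hz, him⟩, rfl⟩
    obtain ⟨y, hy, rfl | rfl | rfl⟩ := exists_eq_fsq_of_mem hA hz <;>
      obtain ⟨⟨_, _⟩, _, _⟩ := hQ hy <;> simp only [fsq₁_im, fsq₂_im, fsq₃_im] at him
    · exact Or.inl ⟨y.im, ⟨y, ⟨hy, by linarith⟩, rfl⟩, by simp⟩
    · exact Or.inr ⟨y.re, ⟨y, ⟨hy, by linarith⟩, rfl⟩, by simp⟩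
    · linarith
  · rintro (⟨_, ⟨z, ⟨hz, hre⟩, rfl⟩, rfl⟩ | ⟨_, ⟨z, ⟨hz, him⟩, rfl⟩, rfl⟩)
    · exact ⟨fsq₁ z, ⟨mapsTo_fsq₁ hA hz, by norm_num [hre]⟩, by simp⟩
    · exact ⟨fsq₂ z, ⟨mapsTo_fsq₂ hA hz, by norm_num [him]⟩, by simp⟩

lemma bottomEdge_eq_image_leftEdge (hA : A = fsq₁ '' A ∪ fsq₂ '' A ∪ fsq₃ '' A)
    (hQ : A ⊆ Icc (-1/2) (1/2) ×ℂ Icc (-1/2) (1/2)) :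
    bottomEdge A =
      (fun u => -u / 4 - 3 / 8) '' leftEdge A ∪ (fun u => -u / 4 + 3 / 8) '' leftEdge A := by
  rw [bottomEdge_eq hA hQ, rightEdge_eq hA hQ, topEdge_eq hA hQ, image_image, image_image]
  congr 1 <;> congr 1 <;> funext u <;> ring

lemma leftEdge_subset_Icc (hQ : A ⊆ Icc (-1/2) (1/2) ×ℂ Icc (-1/2) (1/2)) :
    leftEdge A ⊆ Icc (-1/2) (1/2) := by
  rintro _ ⟨z, ⟨hz, -⟩, rfl⟩
  exact (hQ hz).2

lemma bottomEdge_subset_Icc (hQ : A ⊆ Icc (-1/2) (1/2) ×ℂ Icc (-1/2) (1/2)) :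
    bottomEdge A ⊆ Icc (-1/2) (1/2) := by
  rintro _ ⟨z, ⟨hz, -⟩, rfl⟩
  exact (hQ hz).1

lemma mem_bottomEdge_of_neg_half_add_quarter_mem (hA : A = fsq₁ '' A ∪ fsq₂ '' A ∪ fsq₃ '' A)
    (hQ : A ⊆ Icc (-1/2) (1/2) ×ℂ Icc (-1/2) (1/2)) {s : ℝ} (hs : s ∈ leftEdge A)
    (hu : -s / 2 + 1 / 4 ∈ leftEdge A) : s ∈ bottomEdge A := by
  rw [leftEdge_eq hA hQ] at hu
  obtain ⟨e, he, hes⟩ | ⟨e, he, hes⟩ := hu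
  · obtain ⟨he₁, -⟩ := bottomEdge_subset_Icc hQ he
    obtain ⟨-, hs₂⟩ := leftEdge_subset_Icc hQ hs
    obtain rfl : s = 1 / 2 := by simp only at hes; linarith
    -- `fsq₂` sends the corner `-1/2 + i/2` of the left side to the corner `1/2 - i/2` of the bottom
    obtain ⟨z, ⟨hz, hre⟩, him⟩ := hs
    exact ⟨fsq₂ z, ⟨mapsTo_fsq₂ hA hz, by norm_num [him]⟩, by norm_num [hre]⟩
  · obtain rfl : e = s := by simp only at hes; linarith
    exact he

lemma mem_bottomEdge_of_neg_half_sub_quarter_mem (hA : A = fsq₁ '' A ∪ fsq₂ '' A ∪ fsq₃ '' A)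
    (hQ : A ⊆ Icc (-1/2) (1/2) ×ℂ Icc (-1/2) (1/2)) {s : ℝ} (hs : s ∈ leftEdge A)
    (hu : -s / 2 - 1 / 4 ∈ leftEdge A) : s ∈ bottomEdge A := by
  rw [leftEdge_eq hA hQ] at hu
  obtain ⟨e, he, hes⟩ | ⟨e, he, hes⟩ := hu
  · obtain rfl : e = s := by simp only at hes; linarith
    exact he
  · obtain ⟨-, he₂⟩ := bottomEdge_subset_Icc hQ he
    obtain ⟨hs₁, -⟩ := leftEdge_subset_Icc hQ hs
    obtain rfl : s = -1 / 2 := by simp only at hes; linarith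
    obtain ⟨z, ⟨hz, hre⟩, him⟩ := hs
    exact ⟨z, ⟨hz, him⟩, hre⟩

lemma leftEdge_inter_bottomEdge_subset (hA : A = fsq₁ '' A ∪ fsq₂ '' A ∪ fsq₃ '' A)
    (hQ : A ⊆ Icc (-1/2) (1/2) ×ℂ Icc (-1/2) (1/2)) :
    leftEdge A ∩ bottomEdge A ⊆ (fun t => t / 8 + 7 / 16) '' (leftEdge A ∩ bottomEdge A) ∪
      (fun t => t / 8 - 7 / 16) '' (leftEdge A ∩ bottomEdge A) := by
  rintro t ⟨htL, htD⟩
  rw [leftEdge_eq hA hQ] at htL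
  rw [bottomEdge_eq_image_leftEdge hA hQ] at htD
  obtain ⟨d, hd, rfl⟩ | ⟨d, hd, rfl⟩ := htL <;> obtain ⟨u, hu, hut⟩ | ⟨u, hu, hut⟩ := htD <;>
    simp only at hut <;> obtain ⟨hd₁, hd₂⟩ := bottomEdge_subset_Icc hQ hd <;>
    obtain ⟨hu₁, hu₂⟩ := leftEdge_subset_Icc hQ hu
  · rw [bottomEdge_eq_image_leftEdge hA hQ] at hd
    obtain ⟨s, hs, rfl⟩ | ⟨s, hs, rfl⟩ := hd <;> obtain ⟨hs₁, hs₂⟩ := leftEdge_subset_Icc hQ hs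
    · linarith
    · obtain rfl : u = -s / 2 + 1 / 4 := by linarith
      exact Or.inr ⟨s, ⟨hs, mem_bottomEdge_of_neg_half_add_quarter_mem hA hQ hs hu⟩, by ring⟩
  · linarith
  · linarith
  · rw [bottomEdge_eq_image_leftEdge hA hQ] at hd
    obtain ⟨s, hs, rfl⟩ | ⟨s, hs, rfl⟩ := hd <;> obtain ⟨hs₁, hs₂⟩ := leftEdge_subset_Icc hQ hs
    · obtain rfl : u = -s / 2 - 1 / 4 := by linarith
      exact Or.inl ⟨s, ⟨hs, mem_bottomEdge_of_neg_half_sub_quarter_mem hA hQ hs hu⟩, by ring⟩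
    · linarith

lemma image_subset_leftEdge_inter_bottomEdge (hA : A = fsq₁ '' A ∪ fsq₂ '' A ∪ fsq₃ '' A)
    (hQ : A ⊆ Icc (-1/2) (1/2) ×ℂ Icc (-1/2) (1/2)) :
    (fun t => t / 8 + 7 / 16) '' (leftEdge A ∩ bottomEdge A) ∪
      (fun t => t / 8 - 7 / 16) '' (leftEdge A ∩ bottomEdge A) ⊆ leftEdge A ∩ bottomEdge A := by
  have hDL : ∀ d ∈ bottomEdge A, -d / 2 - 1 / 4 ∈ leftEdge A ∧ -d / 2 + 1 / 4 ∈ leftEdge A :=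
    fun d hd => by rw [leftEdge_eq hA hQ]; exact ⟨Or.inl ⟨d, hd, rfl⟩, Or.inr ⟨d, hd, rfl⟩⟩
  have hLD : ∀ u ∈ leftEdge A, -u / 4 - 3 / 8 ∈ bottomEdge A ∧ -u / 4 + 3 / 8 ∈ bottomEdge A :=
    fun u hu => by
      rw [bottomEdge_eq_image_leftEdge hA hQ]; exact ⟨Or.inl ⟨u, hu, rfl⟩, Or.inr ⟨u, hu, rfl⟩⟩
  rintro _ (⟨t, ⟨htL, htD⟩, rfl⟩ | ⟨t, ⟨htL, htD⟩, rfl⟩)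
  · constructor
    · convert (hDL _ (hLD t htL).1).2 using 1; ring
    · convert (hLD _ (hDL t htD).1).2 using 1; ring
  · constructor
    · convert (hDL _ (hLD t htL).2).1 using 1; ring
    · convert (hLD _ (hDL t htD).2).1 using 1; ring

lemma inter_image_I_mul_sub_one (hQ : A ⊆ Icc (-1/2) (1/2) ×ℂ Icc (-1/2) (1/2)) :
    A ∩ (fun z => I * z - 1) '' A =
      (fun t : ℝ => (⟨-1/2, t⟩ : ℂ)) '' (leftEdge A ∩ bottomEdge A) := by
  ext z
  constructor
  · rintro ⟨hz, w, hw, rfl⟩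
    obtain ⟨⟨hz₁, -⟩, -, -⟩ := hQ hz
    obtain ⟨-, hw₁, -⟩ := hQ hw
    simp only [sub_re, mul_re, I_re, zero_mul, I_im, one_mul, zero_sub, one_re] at hz₁
    have him : w.im = -1 / 2 := by linarith
    refine ⟨w.re, ⟨⟨I * w - 1, ⟨hz, by norm_num [him]⟩, by simp⟩, ⟨w, ⟨hw, him⟩, rfl⟩⟩, ?_⟩
    apply Complex.ext <;> norm_num [him]
  · rintro ⟨_, ⟨⟨z, ⟨hz, hre⟩, rfl⟩, ⟨w, ⟨hw, him⟩, hwz⟩⟩, rfl⟩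
    have hz' : z = ⟨-1/2, z.im⟩ := Complex.ext hre rfl
    refine ⟨hz' ▸ hz, w, hw, ?_⟩
    apply Complex.ext <;> norm_num [him, hwz]

end

/-- The boundary set `B = A ∩ h(A)`, `h(z) = iz - 1`, satisfies the self-similar
equation `B = f₃₁₂(B) ∪ f₁₂₃(B)`. -/
theorem fsq_boundary_B_self_similar
    (A : Set ℂ) (hAne : A.Nonempty) (hAc : IsCompact A)
    (hA : A = fsq₁ '' A ∪ fsq₂ '' A ∪ fsq₃ '' A)
    (h : ℂ → ℂ) (hh : ∀ z, h z = Complex.I * z - 1)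
    (B : Set ℂ) (hB : B = A ∩ h '' A) :
    B = (fsq₃ ∘ fsq₁ ∘ fsq₂) '' B ∪ (fsq₁ ∘ fsq₂ ∘ fsq₃) '' B := by
  obtain rfl : h = fun z => I * z - 1 := funext hh
  have hQ := subset_Icc_reProdIm_Icc hAne hAc hA
  have hK := (leftEdge_inter_bottomEdge_subset hA hQ).antisymm
    (image_subset_leftEdge_inter_bottomEdge hA hQ)
  subst hB
  rw [inter_image_I_mul_sub_one hQ, image_image, image_image]
  conv_lhs => rw [hK]
  rw [image_union, image_image, image_image]
  congr 1 <;> refine image_congr fun t _ => ?_ <;> apply Complex.ext <;> simp <;> ring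
end
end
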